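/- arXiv:1712.05475 — 9 statements merged into one kernel-verified Lean document; each statement's English description precedes it below -/
import Mathlib

section
/- Define the Kreweras triangle (h_{n,k}) for n ≥ 1 and 1 ≤ k ≤ n by h_{1,1} = 1 and, for n ≥ 2: h_{n,1} = h_{n-1,1} + h_{n-1,2} + ... + h_{n-1,n-1}; h_{n,2} = 2h_{n,1} - h_{n-1,1}; and for 3 ≤ k ≤ n, h_{n,k} = 2h_{n,k-1} - h_{n,k-2} - h_{n-1,k-1} - h_{n-1,k-2}. Then for all n ≥ 1 and all k with 1 ≤ k ≤ n, one has the symmetry h_{n,k} = h_{n,n-k+1}. -/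
/-!
Fix a row `n ≥ 2` and let `S j` be the `j`-th partial sum of row `n - 1`. Telescoping the
recurrence gives `h n (j + 1) - h n j = S (n - 1) - S j - S (j - 1)`. If row `n - 1` is symmetric,
then `S j + S (n - 1 - j) = S (n - 1)`, so the differences at mirrored positions of row `n` cancel,
and a finite sequence whose mirrored differences cancel is symmetric. Induction on `n` concludes.
-/

open Finset

-- `f 1, …, f N` reads the same backwards; phrased without truncated subtraction.
def IsPalindromic {M : Type*} (f : ℕ → M) (N : ℕ) : Prop :=
  ∀ i j, i + j + 1 = N → f (i + 1) = f (j + 1)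

namespace IsPalindromic

variable {M : Type*}

lemma sum_Icc_one_add_sum_Icc_one [AddCommMonoid M] {a : ℕ → M} {m : ℕ}
    (ha : IsPalindromic a m) {i j : ℕ} (hij : i + j = m) :
    ∑ x ∈ Icc 1 i, a x + ∑ x ∈ Icc 1 j, a x = ∑ x ∈ Icc 1 m, a x := by
  induction j generalizing i with
  | zero => simp [← hij]
  | succ j ih =>
    rw [sum_Icc_succ_top (by omega), ← ih (i := i + 1) (by omega), sum_Icc_succ_top (by omega),
      ha i j (by omega)]
    abel

lemma of_add_eq_add [AddCommGroup M] [IsAddTorsionFree M] {f : ℕ → M} {N : ℕ}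
    (hf : ∀ i j, i + j + 2 = N → f (i + 2) + f (j + 2) = f (i + 1) + f (j + 1)) :
    IsPalindromic f N := by
  have shift : ∀ i j, i + j + 1 = N → f (i + 1) - f (j + 1) = f 1 - f N := by
    intro i
    induction i with
    | zero => intro j hj; subst hj; simp only [zero_add]
    | succ i ih =>
      intro j hij
      rw [← ih (j + 1) (by omega), sub_eq_sub_iff_add_eq_add]
      exact hf i j (by omega)
  intro i j hij
  have hc : f 1 - f N = 0 := by
    refine IsAddTorsionFree.nsmul_right_injective (n := 2) two_ne_zero ?_
    calc 2 • (f 1 - f N) = (f (i + 1) - f (j + 1)) + (f (j + 1) - f (i + 1)) := by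
          rw [two_nsmul, shift i j hij, shift j i (by omega)]
      _ = 2 • 0 := by abel
  rw [← sub_eq_zero, shift i j hij, hc]

end IsPalindromic

section KrewerasRow

variable {a b : ℕ → ℤ} {m : ℕ}

lemma kreweras_row_sub_eq (hb1 : b 1 = ∑ x ∈ Icc 1 m, a x) (hb2 : b 2 = 2 * b 1 - a 1)
    (hbk : ∀ k, 3 ≤ k → k ≤ m + 1 →
      b k = 2 * b (k - 1) - b (k - 2) - a (k - 1) - a (k - 2))
    {j : ℕ} (hj : j + 1 ≤ m) :
    b (j + 2) - b (j + 1) =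
      ∑ x ∈ Icc 1 m, a x - ∑ x ∈ Icc 1 (j + 1), a x - ∑ x ∈ Icc 1 j, a x := by
  induction j with
  | zero =>
    simp only [zero_add, Icc_self, sum_singleton, Icc_eq_empty_of_lt zero_lt_one, sum_empty,
      hb2, hb1]
    ring
  | succ j ih =>
    have hb : b (j + 3) = 2 * b (j + 2) - b (j + 1) - a (j + 2) - a (j + 1) :=
      hbk (j + 3) (by omega) (by omega)
    have hS₁ : ∑ x ∈ Icc 1 (j + 2), a x = ∑ x ∈ Icc 1 (j + 1), a x + a (j + 2) :=
      sum_Icc_succ_top (by omega) a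
    have hS₀ : ∑ x ∈ Icc 1 (j + 1), a x = ∑ x ∈ Icc 1 j, a x + a (j + 1) :=
      sum_Icc_succ_top (by omega) a
    show b (j + 3) - b (j + 2) = _ - ∑ x ∈ Icc 1 (j + 2), a x - _
    linarith [ih (by omega)]

theorem kreweras_row_isPalindromic (ha : IsPalindromic a m)
    (hb1 : b 1 = ∑ x ∈ Icc 1 m, a x) (hb2 : b 2 = 2 * b 1 - a 1)
    (hbk : ∀ k, 3 ≤ k → k ≤ m + 1 →
      b k = 2 * b (k - 1) - b (k - 2) - a (k - 1) - a (k - 2)) :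
    IsPalindromic b (m + 1) := by
  refine IsPalindromic.of_add_eq_add fun i j hij ↦ ?_
  have hi := kreweras_row_sub_eq hb1 hb2 hbk (j := i) (by omega)
  have hj := kreweras_row_sub_eq hb1 hb2 hbk (j := j) (by omega)
  have hsum₁ := ha.sum_Icc_one_add_sum_Icc_one (i := i + 1) (j := j) (by omega)
  have hsum₂ := ha.sum_Icc_one_add_sum_Icc_one (i := i) (j := j + 1) (by omega)
  linarith

end KrewerasRow

theorem kreweras_symmetry_general (h : ℕ → ℕ → ℤ)
    (hrec1 : ∀ n, 2 ≤ n → h n 1 = ∑ i ∈ Finset.Icc 1 (n - 1), h (n - 1) i)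
    (hrec2 : ∀ n, 2 ≤ n → h n 2 = 2 * h n 1 - h (n - 1) 1)
    (hreck : ∀ n k, 3 ≤ k → k ≤ n →
      h n k = 2 * h n (k - 1) - h n (k - 2) - h (n - 1) (k - 1) - h (n - 1) (k - 2)) :
    ∀ n k, 1 ≤ n → 1 ≤ k → k ≤ n → h n k = h n (n - k + 1) := by
  have hrow : ∀ n, 1 ≤ n → IsPalindromic (h n) n := by
    intro n hn
    induction n, hn using Nat.le_induction with
    | base =>
      intro i j hij
      obtain ⟨rfl, rfl⟩ : i = 0 ∧ j = 0 := by omega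
      rfl
    | succ n hn ih =>
      refine kreweras_row_isPalindromic ih ?_ ?_ fun k hk₃ hkn ↦ ?_
      · simpa using hrec1 (n + 1) (by omega)
      · simpa using hrec2 (n + 1) (by omega)
      · simpa using hreck (n + 1) k hk₃ hkn
  intro n k hn hk hkn
  simpa [Nat.sub_add_cancel hk] using hrow n hn (k - 1) (n - k) (by omega)

theorem kreweras_symmetry (h : ℕ → ℕ → ℤ)
    (h11 : h 1 1 = 1)
    (hrec1 : ∀ n, 2 ≤ n → h n 1 = ∑ i ∈ Finset.Icc 1 (n - 1), h (n - 1) i)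
    (hrec2 : ∀ n, 2 ≤ n → h n 2 = 2 * h n 1 - h (n - 1) 1)
    (hreck : ∀ n k, 3 ≤ k → k ≤ n →
      h n k = 2 * h n (k - 1) - h n (k - 2) - h (n - 1) (k - 1) - h (n - 1) (k - 2)) :
    ∀ n k, 1 ≤ n → 1 ≤ k → k ≤ n → h n k = h n (n - k + 1) :=
  kreweras_symmetry_general h hrec1 hrec2 hreck
end

section
/- With the Kreweras triangle (h_{n,k}) defined by h_{1,1} = 1, h_{n,1} = sum_{i=1}^{n-1} h_{n-1,i}, h_{n,2} = 2h_{n,1} - h_{n-1,1}, and h_{n,k} = 2h_{n,k-1} - h_{n,k-2} - h_{n-1,k-1} - h_{n-1,k-2} for 3 ≤ k ≤ n, and with the convention h_{n,0} = 0, one has for all n ≥ 2 and all 1 ≤ k ≤ n: h_{n,k} - h_{n,k-1} = sum_{i=k}^{n-1} h_{n-1,i} - sum_{i=1}^{k-2} h_{n-1,i}. -/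
open Finset

lemma sum_Icc_eq_add_sum_Icc_succ {M : Type*} [AddCommMonoid M] (f : ℕ → M) {k m : ℕ}
    (hkm : k ≤ m) : ∑ i ∈ Icc k m, f i = f k + ∑ i ∈ Icc (k + 1) m, f i := by
  rw [Icc_add_one_left_eq_Ioc, add_sum_Ioc_eq_sum_Icc hkm]

lemma sum_Icc_succ_sub_sum_Icc_one {M : Type*} [AddCommGroup M] (f : ℕ → M) {k m : ℕ}
    (hk : 2 ≤ k) (hkm : k ≤ m) :
    ∑ i ∈ Icc (k + 1) m, f i - ∑ i ∈ Icc 1 (k - 1), f i =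
      ∑ i ∈ Icc k m, f i - ∑ i ∈ Icc 1 (k - 2), f i - f k - f (k - 1) := by
  have head : ∑ i ∈ Icc 1 (k - 1), f i = ∑ i ∈ Icc 1 (k - 2), f i + f (k - 1) := by
    obtain ⟨j, rfl⟩ : ∃ j, k = j + 2 := ⟨k - 2, by omega⟩
    exact sum_Icc_succ_top (by omega) f
  rw [sum_Icc_eq_add_sum_Icc_succ f hkm, head]
  abel

theorem kreweras_difference_general (h : ℕ → ℕ → ℤ)
    (h0 : ∀ n, h n 0 = 0)
    (hrec1 : ∀ n, 2 ≤ n → h n 1 = ∑ i ∈ Finset.Icc 1 (n - 1), h (n - 1) i)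
    (hrec2 : ∀ n, 2 ≤ n → h n 2 = 2 * h n 1 - h (n - 1) 1)
    (hreck : ∀ n k, 3 ≤ k → k ≤ n →
      h n k = 2 * h n (k - 1) - h n (k - 2) - h (n - 1) (k - 1) - h (n - 1) (k - 2)) :
    ∀ n k, 2 ≤ n → 1 ≤ k → k ≤ n →
      h n k - h n (k - 1) =
        ∑ i ∈ Finset.Icc k (n - 1), h (n - 1) i - ∑ i ∈ Finset.Icc 1 (k - 2), h (n - 1) i := by
  intro n k hn hk hkn
  obtain rfl | hk2 : k = 1 ∨ 2 ≤ k := by omega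
  · simp [h0, hrec1 n hn]
  clear hk
  induction k, hk2 using Nat.le_induction with
  | base =>
    rw [hrec2 n hn, hrec1 n hn, sum_Icc_eq_add_sum_Icc_succ _ (show 1 ≤ n - 1 by omega)]
    simp only [Nat.sub_self, Icc_eq_empty_of_lt zero_lt_one, sum_empty]
    ring
  | succ k hk ih =>
    -- both sides drop by `h (n - 1) k + h (n - 1) (k - 1)` when `k` increases
    rw [Nat.add_sub_cancel, show k + 1 - 2 = k - 1 by omega,
      sum_Icc_succ_sub_sum_Icc_one _ hk (by omega), ← ih (by omega),
      hreck n (k + 1) (by omega) hkn, Nat.add_sub_cancel, show k + 1 - 2 = k - 1 by omega]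
    ring

theorem kreweras_difference (h : ℕ → ℕ → ℤ)
    (h11 : h 1 1 = 1)
    (h0 : ∀ n, h n 0 = 0)
    (hrec1 : ∀ n, 2 ≤ n → h n 1 = ∑ i ∈ Finset.Icc 1 (n - 1), h (n - 1) i)
    (hrec2 : ∀ n, 2 ≤ n → h n 2 = 2 * h n 1 - h (n - 1) 1)
    (hreck : ∀ n k, 3 ≤ k → k ≤ n →
      h n k = 2 * h n (k - 1) - h n (k - 2) - h (n - 1) (k - 1) - h (n - 1) (k - 2)) :
    ∀ n k, 2 ≤ n → 1 ≤ k → k ≤ n →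
      h n k - h n (k - 1) =
        ∑ i ∈ Finset.Icc k (n - 1), h (n - 1) i - ∑ i ∈ Finset.Icc 1 (k - 2), h (n - 1) i :=
  kreweras_difference_general h h0 hrec1 hrec2 hreck
end

section
/- Define the polynomial Kreweras triangle (K_{n,k}) in ℤ[x] for n ≥ 1 and 1 ≤ k ≤ n by K_{1,1} = x, K_{0,1} = 1, and for n ≥ 2: K_{n,1} = (x-1)K_{n-1,1} - K_{n-1,2} - ... - K_{n-1,n-1}; K_{n,2} = 2K_{n,1} + K_{n-1,1} - x^2 K_{n-2,1}; and for 3 ≤ k ≤ n, K_{n,k} = 2K_{n,k-1} - K_{n,k-2} + K_{n-1,k-1} + K_{n-1,k-2} + 2x K_{n-2,k-2}. Then for all n ≥ 1 and 1 ≤ k ≤ n, K_{n,n+1-k} = K_{n,k}. -/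
open Polynomial Finset

/-!
Fix a row `n ≥ 3` whose predecessors are palindromic and put `E j = K n j - K n (n + 1 - j)`.
Subtracting the recurrence at `k = n + 1 - j` from the one at `k = j + 2`, the contributions of
rows `n - 1` and `n - 2` cancel by palindromicity, so `E` has constant first differences.
Summing the recurrence along row `n`, the second differences of the row telescope to
`(E 2 - E 1) + 2 (K n 1 - K n 2)`, while the first-column recurrences evaluate the other side to
`2 (K n 1 - K n 2)`; hence `E 2 = E 1` and `E` is constant. Since `E n = -E 1` and `ℤ[x]` has no `2`-torsion, `E = 0`.
-/

def IsPalindromicRow {α : Type*} (K : ℕ → ℕ → α) (n : ℕ) : Prop :=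
  ∀ k, 1 ≤ k → k ≤ n → K n (n + 1 - k) = K n k

section

variable {R : Type*} [CommRing R]

lemma sum_range_second_difference (a : ℕ → R) (t : ℕ) :
    ∑ i ∈ range t, (a (i + 2) - 2 * a (i + 1) + a i) = (a (t + 1) - a t) - (a 1 - a 0) := by
  rw [← sum_range_sub (fun i ↦ a (i + 1) - a i)]
  exact sum_congr rfl fun i _ ↦ by ring

lemma eq_apply_one_of_sub_eq_sub {e : ℕ → R} {N : ℕ}
    (hstep : ∀ j, 1 ≤ j → j + 2 ≤ N → e (j + 2) - e (j + 1) = e (j + 1) - e j)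
    (h21 : e 2 = e 1) : ∀ j, 1 ≤ j → j ≤ N → e j = e 1 := by
  have hsucc : ∀ j, 1 ≤ j → j + 1 ≤ N → e (j + 1) = e j := by
    intro j hj
    induction j, hj using Nat.le_induction with
    | base => exact fun _ ↦ h21
    | succ j hj ih =>
      intro hjN
      linear_combination hstep j hj hjN + ih (by omega)
  intro j hj
  induction j, hj using Nat.le_induction with
  | base => exact fun _ ↦ rfl
  | succ j hj ih => exact fun hjN ↦ (hsucc j hj hjN).trans (ih (by omega))

def rowSum (K : ℕ → ℕ → R) (r : ℕ) : R := ∑ i ∈ range r, K r (i + 1)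

def rowDefect (K : ℕ → ℕ → R) (n j : ℕ) : R := K n j - K n (n + 1 - j)

variable {x : R} {K : ℕ → ℕ → R}

lemma rowDefect_self (n : ℕ) : rowDefect K n n = -rowDefect K n 1 := by
  rw [rowDefect, rowDefect, Nat.add_sub_cancel_left, Nat.add_sub_cancel, neg_sub]

lemma first_entry_eq_sub_rowSum
    (hrec1 : ∀ n, 2 ≤ n → K n 1 = (x - 1) * K (n - 1) 1 - ∑ i ∈ Icc 2 (n - 1), K (n - 1) i)
    (m : ℕ) : K (m + 2) 1 = x * K (m + 1) 1 - rowSum K (m + 1) := by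
  rw [hrec1 (m + 2) (by omega), rowSum, sum_range_succ', ← Ico_add_one_right_eq_Icc,
    sum_Ico_eq_sum_range]
  simp only [Nat.reduceSubDiff, add_comm 2]
  ring

lemma rowDefect_second_diff
    (hreck : ∀ n k, 3 ≤ k → k ≤ n →
      K n k = 2 * K n (k - 1) - K n (k - 2) + K (n - 1) (k - 1) + K (n - 1) (k - 2)
        + 2 * x * K (n - 2) (k - 2))
    {n j : ℕ} (hj : 1 ≤ j) (hjn : j + 2 ≤ n)
    (hpal₁ : IsPalindromicRow K (n - 1)) (hpal₂ : IsPalindromicRow K (n - 2)) :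
    rowDefect K n (j + 2) - rowDefect K n (j + 1) = rowDefect K n (j + 1) - rowDefect K n j := by
  obtain ⟨d, rfl⟩ : ∃ d, n = j + d + 2 := ⟨n - j - 2, by omega⟩
  have hfwd := hreck _ (j + 2) (by omega) hjn
  have hbwd := hreck (j + d + 2) (d + 3) (by omega) (by omega)
  have s₁ := hpal₁ j hj (by omega)
  have s₂ := hpal₁ (j + 1) (by omega) (by omega)
  have s₃ := hpal₂ j hj (by omega)
  simp only [rowDefect, show j + d + 2 + 1 - j = d + 3 by omega,
    show j + d + 2 + 1 - (j + 1) = d + 2 by omega, show j + d + 2 + 1 - (j + 2) = d + 1 by omega]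
  simp only [show j + d + 2 - 1 = j + d + 1 by omega, show j + d + 2 - 2 = j + d by omega,
    show j + d + 1 + 1 - j = d + 2 by omega, show j + d + 1 + 1 - (j + 1) = d + 1 by omega,
    show j + d + 1 - j = d + 1 by omega, Nat.reduceSubDiff] at hfwd hbwd s₁ s₂ s₃
  linear_combination hfwd - hbwd - s₁ - s₂ - 2 * x * s₃

lemma rowDefect_two_eq_one
    (hrec1 : ∀ n, 2 ≤ n → K n 1 = (x - 1) * K (n - 1) 1 - ∑ i ∈ Icc 2 (n - 1), K (n - 1) i)
    (hrec2 : ∀ n, 2 ≤ n → K n 2 = 2 * K n 1 + K (n - 1) 1 - x ^ 2 * K (n - 2) 1)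
    (hreck : ∀ n k, 3 ≤ k → k ≤ n →
      K n k = 2 * K n (k - 1) - K n (k - 2) + K (n - 1) (k - 1) + K (n - 1) (k - 2)
        + 2 * x * K (n - 2) (k - 2))
    (m : ℕ) (hpal : IsPalindromicRow K (m + 2)) :
    rowDefect K (m + 3) 2 = rowDefect K (m + 3) 1 := by
  have htele := sum_range_second_difference (fun i ↦ K (m + 3) (i + 1)) (m + 1)
  have hsum : ∑ i ∈ range (m + 1), (K (m + 3) (i + 3) - 2 * K (m + 3) (i + 2) + K (m + 3) (i + 1))
      = ∑ i ∈ range (m + 1), K (m + 2) (i + 2) + ∑ i ∈ range (m + 1), K (m + 2) (i + 1)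
        + 2 * x * rowSum K (m + 1) := by
    rw [rowSum, mul_sum, ← sum_add_distrib, ← sum_add_distrib]
    refine sum_congr rfl fun i hi ↦ ?_
    have := hreck (m + 3) (i + 3) (by omega) (by simp at hi; omega)
    simp only [Nat.reduceSubDiff] at this
    linear_combination this
  have hrow₁ : rowSum K (m + 2) = K (m + 2) 1 + ∑ i ∈ range (m + 1), K (m + 2) (i + 2) := by
    rw [rowSum, sum_range_succ']
    ring
  have hrow₂ : rowSum K (m + 2) = ∑ i ∈ range (m + 1), K (m + 2) (i + 1) + K (m + 2) (m + 2) :=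
    sum_range_succ _ _
  have ha₁ := first_entry_eq_sub_rowSum hrec1 (m + 1)
  have hg₁ := first_entry_eq_sub_rowSum hrec1 m
  have ha₂ := hrec2 (m + 3) (by omega)
  have hsym := hpal 1 le_rfl (by omega)
  simp only [Nat.add_assoc, Nat.reduceAdd, Nat.zero_add] at htele ha₁
  simp only [Nat.reduceSubDiff] at ha₂ hsym
  simp only [rowDefect, Nat.reduceSubDiff]
  linear_combination hsum - htele - hrow₁ - hrow₂ - hsym + 2 * ha₁ + 2 * x * hg₁ + 2 * ha₂

lemma isPalindromicRow_two (hK01 : K 0 1 = 1) (hK11 : K 1 1 = x)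
    (hrec1 : ∀ n, 2 ≤ n → K n 1 = (x - 1) * K (n - 1) 1 - ∑ i ∈ Icc 2 (n - 1), K (n - 1) i)
    (hrec2 : ∀ n, 2 ≤ n → K n 2 = 2 * K n 1 + K (n - 1) 1 - x ^ 2 * K (n - 2) 1) :
    IsPalindromicRow K 2 := by
  have h21 : K 2 1 = (x - 1) * x := by simpa [hK11] using hrec1 2 le_rfl
  have h22 : K 2 2 = K 2 1 := by
    rw [hrec2 2 le_rfl]
    simp only [Nat.reduceSub, hK01, hK11, h21]
    ring
  intro k hk hk2
  interval_cases k
  exacts [h22, h22.symm]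

theorem isPalindromicRow_of_rec [IsAddTorsionFree R] (hK01 : K 0 1 = 1) (hK11 : K 1 1 = x)
    (hrec1 : ∀ n, 2 ≤ n → K n 1 = (x - 1) * K (n - 1) 1 - ∑ i ∈ Icc 2 (n - 1), K (n - 1) i)
    (hrec2 : ∀ n, 2 ≤ n → K n 2 = 2 * K n 1 + K (n - 1) 1 - x ^ 2 * K (n - 2) 1)
    (hreck : ∀ n k, 3 ≤ k → k ≤ n →
      K n k = 2 * K n (k - 1) - K n (k - 2) + K (n - 1) (k - 1) + K (n - 1) (k - 2)
        + 2 * x * K (n - 2) (k - 2))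
    (n : ℕ) : IsPalindromicRow K n := by
  induction n using Nat.strong_induction_on with
  | _ n ih =>
  match n with
  | 0 => exact fun k hk hk0 ↦ absurd hk0 (by omega)
  | 1 =>
    intro k hk hk1
    obtain rfl : k = 1 := by omega
    rfl
  | 2 => exact isPalindromicRow_two hK01 hK11 hrec1 hrec2
  | m + 3 =>
    have hconst := eq_apply_one_of_sub_eq_sub
      (fun j hj hjn ↦ rowDefect_second_diff hreck hj hjn (ih _ (by omega)) (ih _ (by omega)))
      (rowDefect_two_eq_one hrec1 hrec2 hreck m (ih _ (by omega)))
    have hzero : rowDefect K (m + 3) 1 = 0 := by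
      have hlast := hconst (m + 3) (by omega) le_rfl
      rw [rowDefect_self] at hlast
      exact self_eq_neg.1 hlast.symm
    intro k hk hkn
    have hdef := hconst k hk hkn
    rw [hzero, rowDefect, sub_eq_zero] at hdef
    exact hdef.symm

end

theorem polyKreweras_symmetry (K : ℕ → ℕ → Polynomial ℤ)
    (hK01 : K 0 1 = 1)
    (hK11 : K 1 1 = X)
    (hrec1 : ∀ n, 2 ≤ n → K n 1 = (X - 1) * K (n - 1) 1 - ∑ i ∈ Finset.Icc 2 (n - 1), K (n - 1) i)
    (hrec2 : ∀ n, 2 ≤ n → K n 2 = 2 * K n 1 + K (n - 1) 1 - X ^ 2 * K (n - 2) 1)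
    (hreck : ∀ n k, 3 ≤ k → k ≤ n →
      K n k = 2 * K n (k - 1) - K n (k - 2) + K (n - 1) (k - 1) + K (n - 1) (k - 2)
        + 2 * X * K (n - 2) (k - 2)) :
    ∀ n k, 1 ≤ k → k ≤ n → K n (n + 1 - k) = K n k :=
  isPalindromicRow_of_rec hK01 hK11 hrec1 hrec2 hreck
end

section
/- With the polynomial Kreweras triangle (K_{n,k}) and the integer Kreweras triangle (h_{n,k}) defined by their respective recurrences, for all n ≥ 1 and 1 ≤ k ≤ n, the polynomial K_{n,k} has degree n, is monic, has constant coefficient 0, and its coefficient of x equals (-1)^{n-1} h_{n,k}. -/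
open Polynomial

/-!
In every recurrence one term is monic of full degree `n` once `2 K_{n,k-1} - K_{n,k-2}` is
regrouped as `K_{n,k-1} + (K_{n,k-1} - K_{n,k-2})` (and `2 K_{n,1} - X² K_{n-2,1}` likewise):
the bracket is a difference of two monic polynomials of degree `n`, and all other terms have
degree below `n`. All constant terms vanish, so in the two lowest coefficients the terms `X² K`
and `2 X K` are invisible and `(X - 1) K` contributes `-K₁`; what remains is exactly the
recurrence of `h`, twisted by the sign `(-1)^(n-1)`.
-/

theorem Polynomial.natDegree_add_lt_of_lt {R : Type*} [Semiring R] {p q : R[X]} {n : ℕ}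
    (hp : p.natDegree < n) (hq : q.natDegree < n) : (p + q).natDegree < n :=
  (natDegree_add_le p q).trans_lt (max_lt hp hq)

theorem triangle_induction {P : ℕ → ℕ → Prop} (one_one : P 1 1)
    (col_one : ∀ n, 2 ≤ n → (∀ i, 1 ≤ i → i ≤ n - 1 → P (n - 1) i) → P n 1)
    (col_two : ∀ n, 2 ≤ n → P n 1 → P (n - 1) 1 → (3 ≤ n → P (n - 2) 1) → P n 2)
    (col_succ : ∀ n k, 3 ≤ k → k ≤ n → P n (k - 1) → P n (k - 2) → P (n - 1) (k - 1) →
      P (n - 1) (k - 2) → P (n - 2) (k - 2) → P n k) :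
    ∀ n k, 1 ≤ k → k ≤ n → P n k := by
  intro n
  induction n using Nat.strong_induction_on with
  | _ n ihn =>
  intro k
  induction k using Nat.strong_induction_on with
  | _ k ihk =>
  intro hk hkn
  rcases (by omega : n = 1 ∨ 2 ≤ n) with rfl | hn
  · obtain rfl : k = 1 := by omega
    exact one_one
  rcases (by omega : k = 1 ∨ k = 2 ∨ 3 ≤ k) with rfl | rfl | hk3
  · exact col_one n hn fun i hi hin => ihn (n - 1) (by omega) i hi hin
  · exact col_two n hn (ihk 1 (by omega) le_rfl (by omega))
      (ihn (n - 1) (by omega) 1 le_rfl (by omega))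
      fun hn3 => ihn (n - 2) (by omega) 1 le_rfl (by omega)
  · exact col_succ n k hk3 hkn (ihk _ (by omega) (by omega) (by omega))
      (ihk _ (by omega) (by omega) (by omega)) (ihn _ (by omega) _ (by omega) (by omega))
      (ihn _ (by omega) _ (by omega) (by omega)) (ihn _ (by omega) _ (by omega) (by omega))

structure IsPolyKreweras (K : ℕ → ℕ → ℤ[X]) : Prop where
  zero_one : K 0 1 = 1
  one_one : K 1 1 = X
  col_one : ∀ n, 2 ≤ n →
    K n 1 = (X - 1) * K (n - 1) 1 - ∑ i ∈ Finset.Icc 2 (n - 1), K (n - 1) i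
  col_two : ∀ n, 2 ≤ n → K n 2 = 2 * K n 1 + K (n - 1) 1 - X ^ 2 * K (n - 2) 1
  col_succ : ∀ n k, 3 ≤ k → k ≤ n →
    K n k = 2 * K n (k - 1) - K n (k - 2) + K (n - 1) (k - 1) + K (n - 1) (k - 2)
      + 2 * X * K (n - 2) (k - 2)

structure IsKreweras (h : ℕ → ℕ → ℤ) : Prop where
  one_one : h 1 1 = 1
  col_one : ∀ n, 2 ≤ n → h n 1 = ∑ i ∈ Finset.Icc 1 (n - 1), h (n - 1) i
  col_two : ∀ n, 2 ≤ n → h n 2 = 2 * h n 1 - h (n - 1) 1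
  col_succ : ∀ n k, 3 ≤ k → k ≤ n →
    h n k = 2 * h n (k - 1) - h n (k - 2) - h (n - 1) (k - 1) - h (n - 1) (k - 2)

namespace IsPolyKreweras

variable {K : ℕ → ℕ → ℤ[X]}

theorem isMonicOfDegree (hK : IsPolyKreweras K) :
    ∀ n k, 1 ≤ k → k ≤ n → IsMonicOfDegree (K n k) n := by
  refine triangle_induction ?_ ?_ ?_ ?_
  · rw [hK.one_one]
    exact isMonicOfDegree_X ℤ
  · intro n hn prev
    have lead : IsMonicOfDegree ((X - 1) * K (n - 1) 1) n := by
      have := (isMonicOfDegree_X_sub_one (1 : ℤ)).mul (prev 1 le_rfl (by omega))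
      rwa [map_one, show 1 + (n - 1) = n by omega] at this
    rw [hK.col_one n hn]
    refine lead.sub ((natDegree_sum_le_of_forall_le _ _ fun i hi => ?_).trans_lt
      (by omega : n - 1 < n))
    rw [Finset.mem_Icc] at hi
    exact (prev i (by omega) hi.2).natDegree_eq.le
  · intro n hn h1 hprev hprev2
    have h0 : IsMonicOfDegree (K (n - 2) 1) (n - 2) := by
      rcases (by omega : n = 2 ∨ 3 ≤ n) with rfl | hn3
      · simp [hK.zero_one]
      · exact hprev2 hn3
    have lead : IsMonicOfDegree (X ^ 2 * K (n - 2) 1) n := by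
      have := (isMonicOfDegree_X_pow ℤ 2).mul h0
      rwa [show 2 + (n - 2) = n by omega] at this
    rw [hK.col_two n hn, show 2 * K n 1 + K (n - 1) 1 - X ^ 2 * K (n - 2) 1
      = K n 1 + ((K n 1 - X ^ 2 * K (n - 2) 1) + K (n - 1) 1) by ring]
    exact h1.add_right (natDegree_add_lt_of_lt (h1.natDegree_sub_lt (by omega) lead)
      (by rw [hprev.natDegree_eq]; omega))
  · intro n k hk3 hkn hA hB hC hD hE
    have hXE : (2 * X * K (n - 2) (k - 2)).natDegree < n := by
      have := hE.natDegree_eq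
      refine lt_of_le_of_lt (b := n - 1) ?_ (by omega)
      compute_degree
      omega
    rw [hK.col_succ n k hk3 hkn, show 2 * K n (k - 1) - K n (k - 2) + K (n - 1) (k - 1)
      + K (n - 1) (k - 2) + 2 * X * K (n - 2) (k - 2) = K n (k - 1) + ((K n (k - 1) - K n (k - 2))
      + K (n - 1) (k - 1) + K (n - 1) (k - 2) + 2 * X * K (n - 2) (k - 2)) by ring]
    refine hA.add_right (natDegree_add_lt_of_lt (natDegree_add_lt_of_lt
      (natDegree_add_lt_of_lt (hA.natDegree_sub_lt (by omega) hB) ?_) ?_) hXE)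
    · rw [hC.natDegree_eq]; omega
    · rw [hD.natDegree_eq]; omega

theorem coeff_zero (hK : IsPolyKreweras K) :
    ∀ n k, 1 ≤ k → k ≤ n → (K n k).coeff 0 = 0 := by
  refine triangle_induction ?_ ?_ ?_ ?_
  · simp [hK.one_one]
  · intro n hn prev
    rw [hK.col_one n hn, coeff_sub, mul_coeff_zero, prev 1 le_rfl (by omega), mul_zero,
      finsetSum_coeff, Finset.sum_eq_zero fun i hi =>
        prev i (one_le_two.trans (Finset.mem_Icc.1 hi).1) (Finset.mem_Icc.1 hi).2, sub_zero]
  · intro n hn h1 hprev _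
    simp [hK.col_two n hn, mul_coeff_zero, h1, hprev]
  · intro n k hk3 hkn hA hB hC hD hE
    simp [hK.col_succ n k hk3 hkn, mul_coeff_zero, hA, hB, hC, hD, hE]

theorem coeff_one (hK : IsPolyKreweras K) {h : ℕ → ℕ → ℤ} (hh : IsKreweras h) :
    ∀ n k, 1 ≤ k → k ≤ n → (K n k).coeff 1 = (-1) ^ (n - 1) * h n k := by
  refine triangle_induction ?_ ?_ ?_ ?_
  · simp [hK.one_one, hh.one_one]
  · intro n hn prev
    obtain ⟨m, rfl⟩ : ∃ m, n = m + 2 := ⟨n - 2, by omega⟩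
    rw [hK.col_one _ hn, hh.col_one _ hn]
    simp only [Nat.reduceSubDiff, Nat.add_sub_cancel] at prev ⊢
    have hsum : (∑ i ∈ Finset.Icc 2 (m + 1), K (m + 1) i).coeff 1
        = (-1) ^ m * ∑ i ∈ Finset.Icc 2 (m + 1), h (m + 1) i := by
      rw [finsetSum_coeff, Finset.mul_sum]
      exact Finset.sum_congr rfl fun i hi => prev i (one_le_two.trans (Finset.mem_Icc.1 hi).1)
        (Finset.mem_Icc.1 hi).2
    rw [coeff_sub, hsum, sub_mul, one_mul, coeff_sub, coeff_X_mul,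
      hK.coeff_zero _ _ le_rfl (by omega), prev 1 le_rfl (by omega),
      ← Finset.insert_Icc_add_one_left_eq_Icc (by omega : 1 ≤ m + 1), Finset.sum_insert (by simp),
      one_add_one_eq_two]
    ring
  · intro n hn h1 hprev _
    obtain ⟨m, rfl⟩ : ∃ m, n = m + 2 := ⟨n - 2, by omega⟩
    rw [hK.col_two _ hn, hh.col_two _ hn]
    simp only [Nat.reduceSubDiff, Nat.add_sub_cancel] at h1 hprev ⊢
    simp only [coeff_sub, coeff_add, coeff_ofNat_mul, h1, hprev, coeff_X_pow_mul',
      Nat.not_ofNat_le_one, ↓reduceIte, sub_zero]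
    ring
  · intro n k hk3 hkn hA hB hC hD _
    obtain ⟨m, rfl⟩ : ∃ m, n = m + 2 := ⟨n - 2, by omega⟩
    rw [hK.col_succ _ _ hk3 hkn, hh.col_succ _ _ hk3 hkn]
    simp only [Nat.reduceSubDiff, Nat.add_sub_cancel] at hA hB hC hD ⊢
    simp only [mul_assoc, coeff_add, coeff_sub, coeff_ofNat_mul, hA, hB, hC, hD, coeff_X_mul,
      hK.coeff_zero _ _ (by omega : 1 ≤ k - 2) (by omega : k - 2 ≤ m), mul_zero, add_zero]
    ring

end IsPolyKreweras

theorem polyKreweras_shape (K : ℕ → ℕ → Polynomial ℤ) (h : ℕ → ℕ → ℤ)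
    (hK01 : K 0 1 = 1)
    (hK11 : K 1 1 = X)
    (hKrec1 : ∀ n, 2 ≤ n → K n 1 = (X - 1) * K (n - 1) 1 - ∑ i ∈ Finset.Icc 2 (n - 1), K (n - 1) i)
    (hKrec2 : ∀ n, 2 ≤ n → K n 2 = 2 * K n 1 + K (n - 1) 1 - X ^ 2 * K (n - 2) 1)
    (hKreck : ∀ n k, 3 ≤ k → k ≤ n →
      K n k = 2 * K n (k - 1) - K n (k - 2) + K (n - 1) (k - 1) + K (n - 1) (k - 2)
        + 2 * X * K (n - 2) (k - 2))
    (h11 : h 1 1 = 1)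
    (hrec1 : ∀ n, 2 ≤ n → h n 1 = ∑ i ∈ Finset.Icc 1 (n - 1), h (n - 1) i)
    (hrec2 : ∀ n, 2 ≤ n → h n 2 = 2 * h n 1 - h (n - 1) 1)
    (hreck : ∀ n k, 3 ≤ k → k ≤ n →
      h n k = 2 * h n (k - 1) - h n (k - 2) - h (n - 1) (k - 1) - h (n - 1) (k - 2)) :
    ∀ n k, 1 ≤ k → k ≤ n →
      (K n k).degree = n ∧ (K n k).Monic ∧ (K n k).coeff 0 = 0 ∧
      (K n k).coeff 1 = (-1) ^ (n - 1) * h n k := by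
  have hK : IsPolyKreweras K := ⟨hK01, hK11, hKrec1, hKrec2, hKreck⟩
  have hh : IsKreweras h := ⟨h11, hrec1, hrec2, hreck⟩
  intro n k hk hkn
  have hmonic := hK.isMonicOfDegree n k hk hkn
  exact ⟨by rw [degree_eq_natDegree hmonic.ne_zero, hmonic.natDegree_eq], hmonic.monic,
    hK.coeff_zero n k hk hkn, hK.coeff_one hh n k hk hkn⟩
end

section
/- Define a_{n,k,1} to be the negative of the coefficient of x^{n-1} in the polynomial K_{n,k} of the polynomial Kreweras triangle. Then for all n ≥ 1 and 1 ≤ k ≤ n, a_{n,k,1} = C(n,2) + 2(k-1)(n-k), where C(n,2) is the binomial coefficient n choose 2. -/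
/-!
Work modulo polynomials of degree `< n - 1`, where the claim reads
`K n k ≡ X ^ n - a_{n,k,1} X ^ (n - 1)`. The recurrences are linear, and entries of earlier
rows contribute only their leading term, except `X K_{n-1,1}` and `X ^ 2 K_{n-2,1}`, which
contribute their two leading terms. So the claim reduces to integer recurrences satisfied by
`C(n,2) + 2(k-1)(n-k)`.
-/

open Polynomial

namespace Polynomial

variable {R : Type*} [Ring R] {p q : R[X]} {n : ℕ}

theorem X_pow_mul_smodEq_degreeLT (j : ℕ) (h : p ≡ q [SMOD degreeLT R n]) :
    X ^ j * p ≡ X ^ j * q [SMOD degreeLT R (n + j)] := by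
  rw [SModEq.sub_mem, mem_degreeLT] at h ⊢
  nontriviality R
  rw [← mul_sub, X_pow_mul, degree_mul_X_pow, Nat.cast_add]
  exact WithBot.add_lt_add_right (WithBot.natCast_ne_bot j) h

theorem coeff_eq_of_smodEq_degreeLT (h : p ≡ q [SMOD degreeLT R n]) {j : ℕ} (hj : n ≤ j) :
    p.coeff j = q.coeff j := by
  rw [SModEq.sub_mem, mem_degreeLT] at h
  rw [← sub_eq_zero, ← coeff_sub]
  exact coeff_eq_zero_of_degree_lt (h.trans_le (by exact_mod_cast hj))

theorem smodEq_X_pow_succ_of_smodEq {c : R}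
    (h : p ≡ X ^ (n + 1) - C c * X ^ n [SMOD degreeLT R n]) :
    p ≡ X ^ (n + 1) [SMOD degreeLT R (n + 1)] := by
  refine (h.mono (degreeLT_mono n.le_succ)).trans ?_
  rw [SModEq.sub_mem, sub_sub_cancel_left, neg_mem_iff, mem_degreeLT]
  exact (degree_C_mul_X_pow_le n c).trans_lt (by exact_mod_cast n.lt_succ_self)

end Polynomial

structure IsPolyKreweras_s5 (K : ℕ → ℕ → ℤ[X]) : Prop where
  zero_one : K 0 1 = 1
  one_one : K 1 1 = X
  col_one : ∀ n, 2 ≤ n →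
    K n 1 = (X - 1) * K (n - 1) 1 - ∑ i ∈ Finset.Icc 2 (n - 1), K (n - 1) i
  col_two : ∀ n, 2 ≤ n → K n 2 = 2 * K n 1 + K (n - 1) 1 - X ^ 2 * K (n - 2) 1
  col_of_three_le : ∀ n k, 3 ≤ k → k ≤ n →
    K n k = 2 * K n (k - 1) - K n (k - 2) + K (n - 1) (k - 1) + K (n - 1) (k - 2)
      + 2 * X * K (n - 2) (k - 2)

def krewerasSubleading (n k : ℕ) : ℤ := n.choose 2 + 2 * ((k : ℤ) - 1) * ((n : ℤ) - k)

lemma cast_choose_two_succ (n : ℕ) : ((n + 1).choose 2 : ℤ) = n.choose 2 + n := by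
  rw [Nat.choose_succ_succ', Nat.choose_one_right, Nat.cast_add, add_comm]

lemma krewerasSubleading_succ_one (n : ℕ) :
    krewerasSubleading (n + 1) 1 = krewerasSubleading n 1 + n := by
  simp [krewerasSubleading, cast_choose_two_succ]

lemma krewerasSubleading_two (m : ℕ) :
    krewerasSubleading (m + 2) 2 =
      2 * krewerasSubleading (m + 2) 1 - 1 - krewerasSubleading m 1 := by
  simp only [krewerasSubleading, cast_choose_two_succ]
  push_cast
  ring

lemma krewerasSubleading_add_three (m l : ℕ) :
    krewerasSubleading m (l + 3) =
      2 * krewerasSubleading m (l + 2) - krewerasSubleading m (l + 1) - 4 := by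
  simp only [krewerasSubleading]
  push_cast
  ring

namespace IsPolyKreweras_s5

variable {K : ℕ → ℕ → ℤ[X]}

theorem smodEq_col_one (hK : IsPolyKreweras_s5 K) (m : ℕ)
    (hrow : ∀ i ∈ Finset.Icc 1 (m + 1),
      K (m + 1) i ≡ X ^ (m + 1) - C (krewerasSubleading (m + 1) i) * X ^ m
        [SMOD degreeLT ℤ m]) :
    K (m + 2) 1 ≡ X ^ (m + 2) - C (krewerasSubleading (m + 2) 1) * X ^ (m + 1)
      [SMOD degreeLT ℤ (m + 1)] := by
  have h1 : 1 ∈ Finset.Icc 1 (m + 1) := by simp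
  have hsum : ∑ i ∈ Finset.Icc 2 (m + 1), K (m + 1) i ≡
      ∑ _i ∈ Finset.Icc 2 (m + 1), X ^ (m + 1) [SMOD degreeLT ℤ (m + 1)] :=
    SModEq.sum fun i hi =>
      smodEq_X_pow_succ_of_smodEq (hrow i (Finset.Icc_subset_Icc_left one_le_two hi))
  calc K (m + 2) 1
        = X ^ 1 * K (m + 1) 1 - K (m + 1) 1 - ∑ i ∈ Finset.Icc 2 (m + 1), K (m + 1) i := by
        rw [hK.col_one (m + 2) (by omega)]
        simp only [Nat.reduceSubDiff]
        ring
    _ ≡ X ^ 1 * (X ^ (m + 1) - C (krewerasSubleading (m + 1) 1) * X ^ m) - X ^ (m + 1)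
          - ∑ _i ∈ Finset.Icc 2 (m + 1), X ^ (m + 1) [SMOD degreeLT ℤ (m + 1)] :=
        ((X_pow_mul_smodEq_degreeLT 1 (hrow 1 h1)).sub
          (smodEq_X_pow_succ_of_smodEq (hrow 1 h1))).sub hsum
    _ = X ^ (m + 2) - C (krewerasSubleading (m + 2) 1) * X ^ (m + 1) := by
        rw [Finset.sum_const, Nat.card_Icc, krewerasSubleading_succ_one (m + 1)]
        simp only [Nat.reduceSubDiff, map_add, map_natCast, nsmul_eq_mul]
        push_cast
        ring

theorem smodEq_col_two (hK : IsPolyKreweras_s5 K) (m : ℕ)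
    (h21 : K (m + 2) 1 ≡ X ^ (m + 2) - C (krewerasSubleading (m + 2) 1) * X ^ (m + 1)
      [SMOD degreeLT ℤ (m + 1)])
    (h11 : K (m + 1) 1 ≡ X ^ (m + 1) [SMOD degreeLT ℤ (m + 1)])
    (h01 : X ^ 2 * K m 1 ≡ X ^ (m + 2) - C (krewerasSubleading m 1) * X ^ (m + 1)
      [SMOD degreeLT ℤ (m + 1)]) :
    K (m + 2) 2 ≡ X ^ (m + 2) - C (krewerasSubleading (m + 2) 2) * X ^ (m + 1)
      [SMOD degreeLT ℤ (m + 1)] := by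
  calc K (m + 2) 2 = K (m + 2) 1 + K (m + 2) 1 + K (m + 1) 1 - X ^ 2 * K m 1 := by
        rw [hK.col_two (m + 2) (by omega)]
        simp only [Nat.reduceSubDiff]
        ring
    _ ≡ (X ^ (m + 2) - C (krewerasSubleading (m + 2) 1) * X ^ (m + 1))
          + (X ^ (m + 2) - C (krewerasSubleading (m + 2) 1) * X ^ (m + 1)) + X ^ (m + 1)
          - (X ^ (m + 2) - C (krewerasSubleading m 1) * X ^ (m + 1))
          [SMOD degreeLT ℤ (m + 1)] :=
        ((h21.add h21).add h11).sub h01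
    _ = X ^ (m + 2) - C (krewerasSubleading (m + 2) 2) * X ^ (m + 1) := by
        simp only [krewerasSubleading_two, map_sub, map_mul, map_ofNat, map_one]
        ring

theorem smodEq_col_add_three (hK : IsPolyKreweras_s5 K) {m l : ℕ} (hlm : l ≤ m)
    (hA : K (m + 3) (l + 2) ≡
      X ^ (m + 3) - C (krewerasSubleading (m + 3) (l + 2)) * X ^ (m + 2)
      [SMOD degreeLT ℤ (m + 2)])
    (hB : K (m + 3) (l + 1) ≡
      X ^ (m + 3) - C (krewerasSubleading (m + 3) (l + 1)) * X ^ (m + 2)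
      [SMOD degreeLT ℤ (m + 2)])
    (hC : K (m + 2) (l + 2) ≡ X ^ (m + 2) [SMOD degreeLT ℤ (m + 2)])
    (hD : K (m + 2) (l + 1) ≡ X ^ (m + 2) [SMOD degreeLT ℤ (m + 2)])
    (hE : K (m + 1) (l + 1) ≡ X ^ (m + 1) [SMOD degreeLT ℤ (m + 1)]) :
    K (m + 3) (l + 3) ≡ X ^ (m + 3) - C (krewerasSubleading (m + 3) (l + 3)) * X ^ (m + 2)
      [SMOD degreeLT ℤ (m + 2)] := by
  have hXE := X_pow_mul_smodEq_degreeLT 1 hE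
  calc K (m + 3) (l + 3) = K (m + 3) (l + 2) + K (m + 3) (l + 2) - K (m + 3) (l + 1)
        + K (m + 2) (l + 2) + K (m + 2) (l + 1)
        + (X ^ 1 * K (m + 1) (l + 1) + X ^ 1 * K (m + 1) (l + 1)) := by
        rw [hK.col_of_three_le (m + 3) (l + 3) (by omega) (by omega)]
        simp only [Nat.reduceSubDiff]
        ring
    _ ≡ (X ^ (m + 3) - C (krewerasSubleading (m + 3) (l + 2)) * X ^ (m + 2))
          + (X ^ (m + 3) - C (krewerasSubleading (m + 3) (l + 2)) * X ^ (m + 2))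
          - (X ^ (m + 3) - C (krewerasSubleading (m + 3) (l + 1)) * X ^ (m + 2))
          + X ^ (m + 2) + X ^ (m + 2) + (X ^ 1 * X ^ (m + 1) + X ^ 1 * X ^ (m + 1))
          [SMOD degreeLT ℤ (m + 2)] :=
        ((((hA.add hA).sub hB).add hC).add hD).add (hXE.add hXE)
    _ = X ^ (m + 3) - C (krewerasSubleading (m + 3) (l + 3)) * X ^ (m + 2) := by
        simp only [krewerasSubleading_add_three, map_sub, map_mul, map_ofNat]
        ring

theorem smodEq (hK : IsPolyKreweras_s5 K) (m k : ℕ) (hk : 1 ≤ k) (hkm : k ≤ m + 1) :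
    K (m + 1) k ≡ X ^ (m + 1) - C (krewerasSubleading (m + 1) k) * X ^ m
      [SMOD degreeLT ℤ m] := by
  induction m using Nat.strong_induction_on generalizing k with | _ m ihm =>
  induction k using Nat.strong_induction_on with | _ k ihk =>
  match k, hk with
  | 1, _ =>
    cases m with
    | zero => simp [hK.one_one, krewerasSubleading]
    | succ m =>
      exact hK.smodEq_col_one m fun i hi =>
        ihm m m.lt_succ_self i (Finset.mem_Icc.1 hi).1 (Finset.mem_Icc.1 hi).2
  | 2, _ =>
    obtain ⟨m, rfl⟩ : ∃ m', m = m' + 1 := ⟨m - 1, by omega⟩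
    refine hK.smodEq_col_two m (ihk 1 one_lt_two le_rfl (by omega))
      (smodEq_X_pow_succ_of_smodEq (ihm m (by omega) 1 le_rfl (by omega))) ?_
    cases m with
    | zero => simp [hK.zero_one, krewerasSubleading]
    | succ m =>
      convert X_pow_mul_smodEq_degreeLT 2 (ihm m (by omega) 1 le_rfl (by omega)) using 1
      ring
  | l + 3, _ =>
    obtain ⟨m, rfl⟩ : ∃ m', m = m' + 2 := ⟨m - 2, by omega⟩
    exact hK.smodEq_col_add_three (by omega) (ihk _ (by omega) (by omega) (by omega))
      (ihk _ (by omega) (by omega) (by omega))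
      (smodEq_X_pow_succ_of_smodEq (ihm (m + 1) (by omega) _ (by omega) (by omega)))
      (smodEq_X_pow_succ_of_smodEq (ihm (m + 1) (by omega) _ (by omega) (by omega)))
      (smodEq_X_pow_succ_of_smodEq (ihm m (by omega) _ (by omega) (by omega)))

end IsPolyKreweras_s5

theorem polyKreweras_subleading_coeff (K : ℕ → ℕ → Polynomial ℤ)
    (hK01 : K 0 1 = 1)
    (hK11 : K 1 1 = X)
    (hKrec1 : ∀ n, 2 ≤ n → K n 1 = (X - 1) * K (n - 1) 1 - ∑ i ∈ Finset.Icc 2 (n - 1), K (n - 1) i)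
    (hKrec2 : ∀ n, 2 ≤ n → K n 2 = 2 * K n 1 + K (n - 1) 1 - X ^ 2 * K (n - 2) 1)
    (hKreck : ∀ n k, 3 ≤ k → k ≤ n →
      K n k = 2 * K n (k - 1) - K n (k - 2) + K (n - 1) (k - 1) + K (n - 1) (k - 2)
        + 2 * X * K (n - 2) (k - 2)) :
    ∀ n k, 1 ≤ k → k ≤ n →
      -(K n k).coeff (n - 1) = (n.choose 2 : ℤ) + 2 * ((k : ℤ) - 1) * ((n : ℤ) - (k : ℤ)) := by
  have hK : IsPolyKreweras_s5 K := ⟨hK01, hK11, hKrec1, hKrec2, hKreck⟩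
  intro n k hk hkn
  obtain ⟨m, rfl⟩ : ∃ m, n = m + 1 := ⟨n - 1, by omega⟩
  rw [show m + 1 - 1 = m from rfl, coeff_eq_of_smodEq_degreeLT (hK.smodEq m k hk hkn) le_rfl,
    coeff_sub, coeff_C_mul_X_pow, if_pos rfl, coeff_X_pow]
  simp [krewerasSubleading]
end

section
/- For all n ≥ 1, the number of quadruples (w,x,y,z) in [n-1]^4 (with entries in {1,...,n-1}) satisfying w > x < y ≥ z and x < y (i.e., w > x, x < y, y ≥ z) equals (n-2)(n-1)n(5n-7)/24. -/
open Finset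

lemma S1' (m : ℕ) : 2 * ∑ x ∈ Icc 1 m, (x:ℤ) = m * (m+1) := by
  induction m with
  | zero => simp
  | succ k ih => rw [Finset.sum_Icc_succ_top (by omega)]; push_cast; linear_combination ih

lemma S2' (m : ℕ) : 6 * ∑ x ∈ Icc 1 m, (x:ℤ)^2 = m * (m+1) * (2*m+1) := by
  induction m with
  | zero => simp
  | succ k ih => rw [Finset.sum_Icc_succ_top (by omega)]; push_cast; linear_combination ih

lemma S3' (m : ℕ) : 4 * ∑ x ∈ Icc 1 m, (x:ℤ)^3 = (m * (m+1))^2 := by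
  induction m with
  | zero => simp
  | succ k ih => rw [Finset.sum_Icc_succ_top (by omega)]; push_cast; linear_combination ih

lemma innerSum (x : ℕ) : ∀ m, x ≤ m → 2 * ∑ y ∈ Ioc x m, (y:ℤ) = m*(m+1) - x*(x+1) := by
  intro m
  induction m with
  | zero => intro h; interval_cases x; simp
  | succ k ih =>
    intro h
    rcases Nat.lt_or_ge x (k+1) with h' | h'
    · rw [Finset.sum_Ioc_succ_top (by omega)]
      push_cast
      linear_combination ih (by omega)
    · have : x = k+1 := by omega
      subst this; simp

lemma main_sum (m : ℕ) :
    24 * ∑ x ∈ Icc 1 m, ((m:ℤ) - x) * ((m:ℤ)*(m+1) - x*(x+1))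
      = 2 * ((m:ℤ)-1) * m * (m+1) * (5*m-2) := by
  have e : ∑ x ∈ Icc 1 m, ((m:ℤ) - x) * ((m:ℤ)*(m+1) - x*(x+1))
      = ∑ x ∈ Icc 1 m, ((m:ℤ)*((m:ℤ)*(m+1)) - ((m:ℤ)*(m+1) + m)*x - m*x^2 + x^3 + x^2) := by
    apply Finset.sum_congr rfl
    intro x _
    ring
  rw [e]
  simp only [Finset.sum_add_distrib, Finset.sum_sub_distrib, ← Finset.mul_sum,
    Finset.sum_const, Nat.card_Icc, nsmul_eq_mul]
  push_cast
  linear_combination (-12*(m:ℤ)^2 - 24*(m:ℤ)) * S1' m + (-4*(m:ℤ)+4) * S2' m + 6 * S3' m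

lemma card_eq (m : ℕ) : ((Icc 1 m ×ˢ Icc 1 m ×ˢ Icc 1 m ×ˢ Icc 1 m).filter
    (fun q : ℕ×ℕ×ℕ×ℕ => q.2.1 < q.1 ∧ q.2.1 < q.2.2.1 ∧ q.2.2.2 ≤ q.2.2.1)).card
    = ∑ x ∈ Icc 1 m, (m - x) * ∑ y ∈ Ioc x m, y := by
  rw [Finset.card_filter]
  simp only [Finset.sum_product]
  rw [Finset.sum_comm]
  apply Finset.sum_congr rfl
  intro x hx
  simp only [mem_Icc] at hx
  have hz : ∀ w, ∀ y ∈ Icc 1 m, ∑ z ∈ Icc 1 m, (if x < w ∧ x < y ∧ z ≤ y then 1 else 0)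
      = if x < w ∧ x < y then y else 0 := by
    intro w y hy
    simp only [mem_Icc] at hy
    by_cases h : x < w ∧ x < y
    · simp only [h, true_and, and_true, if_true]
      rw [← Finset.card_filter]
      have he : (Icc 1 m).filter (· ≤ y) = Icc 1 y := by
        ext z; simp only [mem_filter, mem_Icc]; omega
      rw [he, Nat.card_Icc]; omega
    · rw [if_neg h]
      apply Finset.sum_eq_zero
      intro z hz
      rw [if_neg]
      tauto
  calc ∑ w ∈ Icc 1 m, ∑ y ∈ Icc 1 m, ∑ z ∈ Icc 1 m,
        (if x < w ∧ x < y ∧ z ≤ y then 1 else 0)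
      = ∑ w ∈ Icc 1 m, ∑ y ∈ Icc 1 m, (if x < w ∧ x < y then y else 0) := by
        exact Finset.sum_congr rfl (fun w _ => Finset.sum_congr rfl (hz w))
    _ = ∑ w ∈ Icc 1 m, (if x < w then ∑ y ∈ Ioc x m, y else 0) := by
        apply Finset.sum_congr rfl
        intro w _
        by_cases hw : x < w
        · simp only [hw, true_and, if_true]
          rw [← Finset.sum_filter]
          congr 1
          ext y; simp only [mem_filter, mem_Icc, mem_Ioc]; omega
        · simp [hw]
    _ = (m - x) * ∑ y ∈ Ioc x m, y := by
        rw [← Finset.sum_filter]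
        have he : (Icc 1 m).filter (x < ·) = Ioc x m := by
          ext w; simp only [mem_filter, mem_Icc, mem_Ioc]; omega
        rw [he, Finset.sum_const, Nat.card_Ioc, smul_eq_mul]

theorem count_quadruples (n : ℕ) (hn : 1 ≤ n) :
    24 * (((Finset.Icc 1 (n - 1)) ×ˢ (Finset.Icc 1 (n - 1)) ×ˢ (Finset.Icc 1 (n - 1)) ×ˢ
        (Finset.Icc 1 (n - 1))).filter
        (fun q : ℕ × ℕ × ℕ × ℕ => q.2.1 < q.1 ∧ q.2.1 < q.2.2.1 ∧ q.2.2.2 ≤ q.2.2.1)).card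
      = (n - 2) * (n - 1) * n * (5 * n - 7) := by
  rcases Nat.lt_or_ge n 2 with h2 | h2
  · interval_cases n
    simp
  set m := n - 1 with hm
  have hm1 : 1 ≤ m := by omega
  rw [card_eq m]
  have hcast : ((∑ x ∈ Icc 1 m, (m - x) * ∑ y ∈ Ioc x m, y : ℕ) : ℤ)
      = ∑ x ∈ Icc 1 m, ((m:ℤ) - x) * ∑ y ∈ Ioc x m, (y:ℤ) := by
    rw [Nat.cast_sum]
    apply Finset.sum_congr rfl
    intro x hx
    simp only [mem_Icc] at hx
    rw [Nat.cast_mul, Nat.cast_sub hx.2, Nat.cast_sum]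
  have h48 : (48:ℤ) * ∑ x ∈ Icc 1 m, ((m:ℤ) - x) * ∑ y ∈ Ioc x m, (y:ℤ)
      = 2 * ((m:ℤ)-1) * m * (m+1) * (5*m-2) := by
    rw [← main_sum m]
    rw [show (48:ℤ) = 24 * 2 by norm_num, mul_assoc, Finset.mul_sum]
    congr 1
    apply Finset.sum_congr rfl
    intro x hx
    simp only [mem_Icc] at hx
    rw [← innerSum x m hx.2]
    ring
  have key : (24:ℤ) * ((∑ x ∈ Icc 1 m, (m - x) * ∑ y ∈ Ioc x m, y : ℕ) : ℤ)
      = ((m:ℤ)-1) * m * (m+1) * (5*m-2) := by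
    have := h48
    rw [← hcast] at this
    linarith
  have hfin : ((24 * ∑ x ∈ Icc 1 m, (m - x) * ∑ y ∈ Ioc x m, y : ℕ) : ℤ)
      = (((n - 2) * (n - 1) * n * (5 * n - 7) : ℕ) : ℤ) := by
    rw [Nat.cast_mul, show ((24:ℕ):ℤ) = 24 from by norm_num, key]
    rw [Nat.cast_mul, Nat.cast_mul, Nat.cast_mul, Nat.cast_sub h2, Nat.cast_sub hn,
      Nat.cast_sub (show 7 ≤ 5*n by omega)]
    push_cast
    ring
  exact_mod_cast hfin
end

section
/- With the Kreweras triangle (h_{n,k}) defined by h_{1,1} = 1, h_{n,1} = sum_{i=1}^{n-1} h_{n-1,i}, h_{n,2} = 2h_{n,1} - h_{n-1,1}, h_{n,k} = 2h_{n,k-1} - h_{n,k-2} - h_{n-1,k-1} - h_{n-1,k-2} for 3 ≤ k ≤ n, every entry h_{n,k} (n ≥ 1, 1 ≤ k ≤ n) is a positive integer. -/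
/-!
Row `n + 1` of the triangle is obtained from row `n` by the kernel `min (k, 2j + 1 - k)`:
in `k` this kernel satisfies the defining recurrence, up to the point masses at `j = k - 1`
and `j = k - 2` that produce the terms `h (n-1) (k-1)` and `h (n-1) (k-2)`.
The kernel takes negative values, but every row is a palindrome, `h n (n + 1 - k) = h n k`,
and the kernel symmetrised under `j ↦ n + 1 - j` is positive, hence so is the next row.
Palindromy propagates because reversing `k` changes the kernel by `2j - (n + 1)`,
whose moment against a palindromic row vanishes.
-/

open Finset

theorem Finset.sum_Icc_reflect {M : Type*} [AddCommMonoid M] (f : ℕ → M) (n : ℕ) :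
    ∑ j ∈ Icc 1 n, f (n + 1 - j) = ∑ j ∈ Icc 1 n, f j := by
  simpa [Ico_add_one_right_eq_Icc] using
    sum_Ico_reflect f 1 (n := n + 1) (m := n + 1) (by omega)

theorem Finset.sum_Icc_mul_reflect_of_symm {R : Type*} [AddCommMonoid R] [Mul R]
    {r : ℕ → R} {n : ℕ} (hr : ∀ j ∈ Icc 1 n, r (n + 1 - j) = r j) (f : ℕ → R) :
    ∑ j ∈ Icc 1 n, f (n + 1 - j) * r j = ∑ j ∈ Icc 1 n, f j * r j := by
  rw [← sum_Icc_reflect (fun j => f j * r j)]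
  exact sum_congr rfl fun j hj => by rw [hr j hj]

def krewerasCoeff (k j : ℕ) : ℤ := min (k : ℤ) (2 * j + 1 - k)

theorem krewerasCoeff_two {j : ℕ} (hj : 1 ≤ j) :
    krewerasCoeff 2 j = 2 * krewerasCoeff 1 j - if j = 1 then 1 else 0 := by
  unfold krewerasCoeff
  split_ifs <;> omega

theorem krewerasCoeff_add_three (k j : ℕ) :
    krewerasCoeff (k + 3) j = 2 * krewerasCoeff (k + 2) j - krewerasCoeff (k + 1) j
      - (if j = k + 2 then 1 else 0) - (if j = k + 1 then 1 else 0) := by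
  unfold krewerasCoeff
  split_ifs <;> omega

theorem krewerasCoeff_add_reflect_pos {n k : ℕ} (hk : 1 ≤ k) (hkn : k ≤ n + 1) (j : ℕ) :
    0 < krewerasCoeff k j + krewerasCoeff k (n + 1 - j) := by
  unfold krewerasCoeff
  omega

theorem krewerasCoeff_sub_reflect {n k j : ℕ} (hk : k ≤ n + 2) (hj : j ≤ n + 1) :
    krewerasCoeff k j - krewerasCoeff (n + 2 - k) (n + 1 - j) = 2 * j - (n + 1) := by
  unfold krewerasCoeff
  omega

def krewerasStep (n : ℕ) (r : ℕ → ℤ) (k : ℕ) : ℤ :=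
  ∑ j ∈ Icc 1 n, krewerasCoeff k j * r j

section KrewerasStep

variable {n : ℕ} {r : ℕ → ℤ}

theorem krewerasStep_one : krewerasStep n r 1 = ∑ j ∈ Icc 1 n, r j := by
  refine sum_congr rfl fun j hj => ?_
  rw [mem_Icc] at hj
  rw [krewerasCoeff, show min ((1 : ℕ) : ℤ) (2 * j + 1 - (1 : ℕ)) = 1 by omega, one_mul]

theorem krewerasStep_two (hn : 1 ≤ n) :
    krewerasStep n r 2 = 2 * krewerasStep n r 1 - r 1 := by
  have hcoeff : ∀ j ∈ Icc 1 n,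
      krewerasCoeff 2 j * r j = 2 * (krewerasCoeff 1 j * r j) - if j = 1 then r j else 0 := by
    intro j hj
    rw [krewerasCoeff_two (mem_Icc.1 hj).1]
    split_ifs <;> ring
  rw [krewerasStep, sum_congr rfl hcoeff, sum_sub_distrib, ← mul_sum, sum_ite_eq',
    if_pos (by simp [hn]), krewerasStep]

theorem krewerasStep_add_three {k : ℕ} (hk : k + 2 ≤ n) :
    krewerasStep n r (k + 3) = 2 * krewerasStep n r (k + 2) - krewerasStep n r (k + 1)
      - r (k + 2) - r (k + 1) := by
  have hcoeff : ∀ j, krewerasCoeff (k + 3) j * r j = 2 * (krewerasCoeff (k + 2) j * r j)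
      - krewerasCoeff (k + 1) j * r j
      - (if j = k + 2 then r j else 0) - (if j = k + 1 then r j else 0) := by
    intro j
    rw [krewerasCoeff_add_three]
    split_ifs <;> ring
  simp only [krewerasStep, hcoeff, sum_sub_distrib, ← mul_sum, sum_ite_eq', mem_Icc]
  rw [if_pos (by omega), if_pos (by omega)]

theorem krewerasStep_reflect (hr : ∀ j ∈ Icc 1 n, r (n + 1 - j) = r j) {k : ℕ}
    (hk : k ∈ Icc 1 (n + 1)) : krewerasStep n r (n + 2 - k) = krewerasStep n r k := by
  rw [mem_Icc] at hk
  have hmoment : ∑ j ∈ Icc 1 n, (2 * (j : ℤ) - (n + 1)) * r j = 0 := by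
    have hreflect := sum_Icc_mul_reflect_of_symm hr fun j => 2 * (j : ℤ) - (n + 1)
    have hneg : ∀ j ∈ Icc 1 n, (2 * ((n + 1 - j : ℕ) : ℤ) - (n + 1)) * r j
        = -((2 * (j : ℤ) - (n + 1)) * r j) := by
      intro j hj
      rw [mem_Icc] at hj
      rw [Nat.cast_sub (by omega)]
      push_cast
      ring
    rw [sum_congr rfl hneg, sum_neg_distrib] at hreflect
    linarith
  rw [eq_comm, ← sub_eq_zero, ← hmoment, krewerasStep, krewerasStep,
    ← sum_Icc_mul_reflect_of_symm hr fun j => krewerasCoeff (n + 2 - k) j, ← sum_sub_distrib]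
  refine sum_congr rfl fun j hj => ?_
  rw [mem_Icc] at hj
  rw [← sub_mul, krewerasCoeff_sub_reflect (by omega) (by omega)]

theorem krewerasStep_pos (hn : 1 ≤ n) (hpos : ∀ j ∈ Icc 1 n, 0 < r j)
    (hr : ∀ j ∈ Icc 1 n, r (n + 1 - j) = r j) {k : ℕ} (hk : k ∈ Icc 1 (n + 1)) :
    0 < krewerasStep n r k := by
  rw [mem_Icc] at hk
  have htwice : 2 * krewerasStep n r k
      = ∑ j ∈ Icc 1 n, (krewerasCoeff k j + krewerasCoeff k (n + 1 - j)) * r j := by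
    rw [two_mul, krewerasStep]
    nth_rw 2 [← sum_Icc_mul_reflect_of_symm hr]
    simp only [add_mul, sum_add_distrib]
  have hsum : 0 < ∑ j ∈ Icc 1 n, (krewerasCoeff k j + krewerasCoeff k (n + 1 - j)) * r j := by
    refine sum_pos (fun j hj => mul_pos ?_ (hpos j hj)) ⟨1, by simp [hn]⟩
    exact krewerasCoeff_add_reflect_pos hk.1 hk.2 j
  linarith

end KrewerasStep

section Triangle

variable {h : ℕ → ℕ → ℤ}

theorem kreweras_eq_krewerasStep
    (hrec1 : ∀ n, 2 ≤ n → h n 1 = ∑ i ∈ Icc 1 (n - 1), h (n - 1) i)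
    (hrec2 : ∀ n, 2 ≤ n → h n 2 = 2 * h n 1 - h (n - 1) 1)
    (hreck : ∀ n k, 3 ≤ k → k ≤ n →
      h n k = 2 * h n (k - 1) - h n (k - 2) - h (n - 1) (k - 1) - h (n - 1) (k - 2))
    {n : ℕ} (hn : 1 ≤ n) {k : ℕ} (hk : k ∈ Icc 1 (n + 1)) :
    h (n + 1) k = krewerasStep n (h n) k := by
  induction k using Nat.strongRecOn with
  | ind k ih =>
  rw [mem_Icc] at hk
  match k, hk with
  | 1, _ => rw [hrec1 _ (by omega), krewerasStep_one, Nat.add_sub_cancel]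
  | 2, _ =>
    rw [hrec2 _ (by omega), krewerasStep_two hn, ih 1 (by omega) (by simp),
      Nat.add_sub_cancel]
  | k + 3, hk =>
    rw [hreck _ _ (by omega) hk.2, show k + 3 - 1 = k + 2 by omega,
      show k + 3 - 2 = k + 1 by omega, Nat.add_sub_cancel, krewerasStep_add_three (by omega),
      ih (k + 2) (by omega) (by simp; omega), ih (k + 1) (by omega) (by simp; omega)]

theorem kreweras_symm
    (hstep : ∀ n, 1 ≤ n → ∀ k ∈ Icc 1 (n + 1), h (n + 1) k = krewerasStep n (h n) k)
    {n : ℕ} (hn : 1 ≤ n) : ∀ k ∈ Icc 1 n, h n (n + 1 - k) = h n k := by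
  induction n, hn using Nat.le_induction with
  | base =>
    intro k hk
    obtain rfl : k = 1 := by simp at hk; omega
    rfl
  | succ n hn ih =>
    intro k hk
    have hk' : n + 1 + 1 - k ∈ Icc 1 (n + 1) := by simp at hk ⊢; omega
    rw [hstep n hn k hk, hstep n hn _ hk', krewerasStep_reflect ih hk]

end Triangle

theorem kreweras_pos (h : ℕ → ℕ → ℤ)
    (h11 : h 1 1 = 1)
    (hrec1 : ∀ n, 2 ≤ n → h n 1 = ∑ i ∈ Finset.Icc 1 (n - 1), h (n - 1) i)
    (hrec2 : ∀ n, 2 ≤ n → h n 2 = 2 * h n 1 - h (n - 1) 1)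
    (hreck : ∀ n k, 3 ≤ k → k ≤ n →
      h n k = 2 * h n (k - 1) - h n (k - 2) - h (n - 1) (k - 1) - h (n - 1) (k - 2)) :
    ∀ n k, 1 ≤ k → k ≤ n → 0 < h n k := by
  have hstep : ∀ n, 1 ≤ n → ∀ k ∈ Icc 1 (n + 1), h (n + 1) k = krewerasStep n (h n) k :=
    fun n hn k hk => kreweras_eq_krewerasStep hrec1 hrec2 hreck hn hk
  intro n k hk hkn
  induction n, (by omega : 1 ≤ n) using Nat.le_induction generalizing k with
  | base =>
    obtain rfl : k = 1 := by omega
    simp [h11]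
  | succ n hn ih =>
    have hk' : k ∈ Icc 1 (n + 1) := mem_Icc.2 ⟨hk, hkn⟩
    rw [hstep n hn k hk']
    exact krewerasStep_pos hn (fun j hj => ih j (mem_Icc.1 hj).1 (mem_Icc.1 hj).2)
      (kreweras_symm hstep hn) hk'
end

section
/- For formal power series over a commutative ring, the Dumont–Zeng contraction identity holds: given a sequence (c_n)_{n≥0}, the continued fraction c_0/(1 - c_1 t/(1 - c_2 t/(1 - ...))) equals c_0 + c_0 c_1 t/(1 - (c_1+c_2)t - c_2 c_3 t^2/(1 - (c_3+c_4)t - c_4 c_5 t^2/(1 - ...))), in the sense that the finite truncations at matching depths agree as rational functions (equivalently, the corresponding convergents agree to the appropriate order in t). -/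
/-!
Two levels of the S-fraction contract to one level of the J-fraction by the division-ring
identity `(1 - x / y)⁻¹ = 1 + x / (y - x)`, applied with `x = c₂ₖ₊₁ t` and
`y = 1 - c₂ₖ₊₂ t (1 + c₂ₖ₊₃ t U (k+2) d)`; induction on the depth then gives
`T (2k+1) (2d) = 1 + c₂ₖ₊₁ t U (k+1) d`. The identity needs `y ≠ 0` and `y - x ≠ 0`: every
tail is regular at `t = 0` (its Laurent expansion is a power series), so these denominators
have the form `1 - t v` with `v` regular, hence constant term `1`.
-/

open scoped LaurentSeries PowerSeries Polynomial

theorem inv_one_sub_mul_inv {K : Type*} [DivisionRing K] {x y : K} (hy : y ≠ 0)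
    (hyx : y - x ≠ 0) : (1 - x * y⁻¹)⁻¹ = 1 + x * (y - x)⁻¹ :=
  calc (1 - x * y⁻¹)⁻¹ = ((y - x) * y⁻¹)⁻¹ := by rw [sub_mul, mul_inv_cancel₀ hy]
    _ = (y - x + x) * (y - x)⁻¹ := by rw [mul_inv_rev, inv_inv, sub_add_cancel]
    _ = 1 + x * (y - x)⁻¹ := by rw [add_mul, mul_inv_cancel₀ hyx]

namespace RatFunc

variable {F : Type*} [Field F]

noncomputable def regularAtZero : Subring (RatFunc F) :=
  (HahnSeries.ofPowerSeries ℤ F).range.comap (algebraMap (RatFunc F) F⸨X⸩)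

theorem algebraMap_mem_regularAtZero (P : F[X]) :
    algebraMap F[X] (RatFunc F) P ∈ regularAtZero :=
  ⟨P, coe_coe P⟩

theorem C_mem_regularAtZero (a : F) : C a ∈ regularAtZero := by
  simpa only [algebraMap_C] using algebraMap_mem_regularAtZero (Polynomial.C a)

theorem X_mem_regularAtZero : (X : RatFunc F) ∈ regularAtZero := by
  simpa only [algebraMap_X] using algebraMap_mem_regularAtZero (Polynomial.X : F[X])

theorem ne_zero_and_inv_mem_regularAtZero {u : RatFunc F} {p : F⟦X⟧}
    (hp : (p : F⸨X⸩) = u) (hp0 : PowerSeries.constantCoeff p ≠ 0) :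
    u ≠ 0 ∧ u⁻¹ ∈ regularAtZero := by
  have hunit : (p : F⸨X⸩) * (p⁻¹ : F⟦X⟧) = 1 := by
    rw [← PowerSeries.coe_mul, PowerSeries.mul_inv_cancel p hp0, map_one]
  refine ⟨?_, p⁻¹, ?_⟩
  · rintro rfl
    rw [hp, map_zero, zero_mul] at hunit
    exact zero_ne_one hunit
  · rw [map_inv₀, ← hp]
    exact eq_inv_of_mul_eq_one_right hunit

theorem one_sub_X_mul_ne_zero_and_inv_mem {v : RatFunc F} (hv : v ∈ regularAtZero) :
    1 - X * v ≠ 0 ∧ (1 - X * v)⁻¹ ∈ regularAtZero := by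
  obtain ⟨q, hq⟩ := hv
  exact ne_zero_and_inv_mem_regularAtZero (p := 1 - PowerSeries.X * q) (by simp [hq]) (by simp)

end RatFunc

open RatFunc

theorem jacobi_tail_mem_regularAtZero {F : Type*} [Field F] (c : ℕ → F)
    (U : ℕ → ℕ → RatFunc F) (hU0 : ∀ k, U k 0 = 0)
    (hU : ∀ k d, U k (d + 1) =
      (1 - C (c (2 * k - 1) + c (2 * k)) * X
         - C (c (2 * k) * c (2 * k + 1)) * X ^ 2 * U (k + 1) d)⁻¹) :
    ∀ d k, U k d ∈ regularAtZero := by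
  intro d
  induction d with
  | zero => simp [hU0]
  | succ d ih =>
    intro k
    rw [hU, show ∀ a b u : RatFunc F, 1 - a * X - b * X ^ 2 * u = 1 - X * (a + b * X * u) by
      intros; ring]
    exact (one_sub_X_mul_ne_zero_and_inv_mem <| add_mem (C_mem_regularAtZero _) <|
      mul_mem (mul_mem (C_mem_regularAtZero _) X_mem_regularAtZero) (ih (k + 1))).2

theorem stieltjes_tail_eq_one_add_jacobi_tail {F : Type*} [Field F] (c : ℕ → F)
    (T U : ℕ → ℕ → RatFunc F)
    (hT0 : ∀ j, T j 0 = 1)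
    (hT : ∀ j d, T j (d + 1) = (1 - C (c j) * X * T (j + 1) d)⁻¹)
    (hU0 : ∀ k, U k 0 = 0)
    (hU : ∀ k d, U k (d + 1) =
      (1 - C (c (2 * k - 1) + c (2 * k)) * X
         - C (c (2 * k) * c (2 * k + 1)) * X ^ 2 * U (k + 1) d)⁻¹) :
    ∀ d k, T (2 * k + 1) (2 * d) = 1 + C (c (2 * k + 1)) * X * U (k + 1) d := by
  intro d
  induction d with
  | zero => simp [hT0, hU0]
  | succ d ih =>
    intro k
    set u := U (k + 2) d
    have hu : u ∈ regularAtZero := jacobi_tail_mem_regularAtZero c U hU0 hU d (k + 2)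
    set v := C (c (2 * k + 2)) * (1 + C (c (2 * k + 3)) * X * u)
    have hv : v ∈ regularAtZero := mul_mem (C_mem_regularAtZero _) <| add_mem (one_mem _) <|
      mul_mem (mul_mem (C_mem_regularAtZero _) X_mem_regularAtZero) hu
    have hD : 1 - X * v ≠ 0 := (one_sub_X_mul_ne_zero_and_inv_mem hv).1
    have hE : 1 - X * v - C (c (2 * k + 1)) * X ≠ 0 := by
      convert (one_sub_X_mul_ne_zero_and_inv_mem
        (add_mem (C_mem_regularAtZero (c (2 * k + 1))) hv)).1 using 1
      ring
    have hT' : T (2 * k + 2) (2 * d + 1) = (1 - X * v)⁻¹ := by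
      rw [hT, show 2 * k + 2 + 1 = 2 * (k + 1) + 1 by ring, ih (k + 1),
        show 2 * (k + 1) + 1 = 2 * k + 3 by ring]
      simp only [v, u]
      ring
    have hU' : U (k + 1) (d + 1) = (1 - X * v - C (c (2 * k + 1)) * X)⁻¹ := by
      rw [hU, show 2 * (k + 1) - 1 = 2 * k + 1 by omega, show 2 * (k + 1) = 2 * k + 2 by ring,
        show 2 * k + 2 + 1 = 2 * k + 3 by ring]
      simp only [v, u, map_add, map_mul]
      ring
    rw [show 2 * (d + 1) = 2 * d + 1 + 1 by ring, hT, hT', hU', inv_one_sub_mul_inv hD hE]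

/-- Dumont–Zeng contraction: the truncations (convergents) of the Stieltjes continued
fraction `c₀/(1 - c₁t/(1 - c₂t/⋯))` at even depths agree, as rational functions,
with the truncations at matching depths of the Jacobi continued fraction
`c₀ + c₀c₁t/(1 - (c₁+c₂)t - c₂c₃t²/(1 - (c₃+c₄)t - ⋯))`.
Here `T j d` is the depth-`d` tail of the S-fraction starting at level `j`,
and `U k d` the depth-`d` tail of the J-fraction starting at level `k`. -/
theorem dumont_zeng_contraction {F : Type*} [Field F] (c : ℕ → F)
    (T U : ℕ → ℕ → RatFunc F)
    (hT0 : ∀ j, T j 0 = 1)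
    (hT : ∀ j d, T j (d + 1) = (1 - RatFunc.C (c j) * RatFunc.X * T (j + 1) d)⁻¹)
    (hU0 : ∀ k, U k 0 = 0)
    (hU : ∀ k d, U k (d + 1) =
      (1 - RatFunc.C (c (2 * k - 1) + c (2 * k)) * RatFunc.X
         - RatFunc.C (c (2 * k) * c (2 * k + 1)) * RatFunc.X ^ 2 * U (k + 1) d)⁻¹) :
    ∀ d, RatFunc.C (c 0) * T 1 (2 * d) =
      RatFunc.C (c 0) + RatFunc.C (c 0 * c 1) * RatFunc.X * U 1 d := by
  intro d
  have h := stieltjes_tail_eq_one_add_jacobi_tail c T U hT0 hT hU0 hU d 0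
  rw [mul_zero, zero_add] at h
  rw [h, map_mul]
  ring
end

section
/- With the polynomial Kreweras triangle (K_{n,k}), for all n ≥ 1, the polynomial K_{n,1} evaluated at x and reduced modulo x^2 is congruent to (-1)^{n-1} h_{n-1} · x, where h_m = h_{m+1,1} is the normalized median Genocchi number; equivalently, the coefficient of x in K_{n,1} is (-1)^{n-1} h_{n-1} and the constant coefficient is 0. -/
/-!
Reduce modulo `x²` by evaluating at the dual number `ε`. Then `K n k` becomes
`((-1) ^ (n - 1) * h n k) • ε`: constant terms vanish, so the terms `X ^ 2 * K` and `2 * X * K` die,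
multiplication by `X - 1` becomes negation, and the alternating sign turns the `+ K (n - 1) _`
terms of the polynomial recurrences into the `- h (n - 1) _` terms of the integer ones.
-/

open Polynomial DualNumber TrivSqZeroExt

variable {R : Type*} [CommRing R]

theorem aeval_eps (p : R[X]) : aeval (ε : R[ε]) p = inl (p.coeff 0) + inr (p.coeff 1) := by
  have h := aeval_add_of_sq_eq_zero p (0 : R[ε]) ε eps_pow_two
  rw [zero_add] at h
  rw [h, ← coeff_zero_eq_aeval_zero', ← coeff_zero_eq_aeval_zero', coeff_derivative]
  simp [algebraMap_eq_inl, inr_eq_smul_eps, Algebra.smul_def]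

structure IsPolyKrewerasTriangle (K : ℕ → ℕ → R[X]) : Prop where
  one_one : K 1 1 = X
  col_one : ∀ n, 2 ≤ n →
    K n 1 = (X - 1) * K (n - 1) 1 - ∑ i ∈ Finset.Icc 2 (n - 1), K (n - 1) i
  col_two : ∀ n, 2 ≤ n → K n 2 = 2 * K n 1 + K (n - 1) 1 - X ^ 2 * K (n - 2) 1
  col_of_three_le : ∀ n k, 3 ≤ k → k ≤ n →
    K n k = 2 * K n (k - 1) - K n (k - 2) + K (n - 1) (k - 1) + K (n - 1) (k - 2)
      + 2 * X * K (n - 2) (k - 2)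

structure IsKrewerasTriangle (h : ℕ → ℕ → R) : Prop where
  one_one : h 1 1 = 1
  col_one : ∀ n, 2 ≤ n → h n 1 = ∑ i ∈ Finset.Icc 1 (n - 1), h (n - 1) i
  col_two : ∀ n, 2 ≤ n → h n 2 = 2 * h n 1 - h (n - 1) 1
  col_of_three_le : ∀ n k, 3 ≤ k → k ≤ n →
    h n k = 2 * h n (k - 1) - h n (k - 2) - h (n - 1) (k - 1) - h (n - 1) (k - 2)

theorem IsPolyKrewerasTriangle.aeval_eps_eq {K : ℕ → ℕ → R[X]} {h : ℕ → ℕ → R}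
    (hK : IsPolyKrewerasTriangle K) (hh : IsKrewerasTriangle h) :
    ∀ n k, 1 ≤ k → k ≤ n → aeval (ε : R[ε]) (K n k) = inr ((-1) ^ (n - 1) * h n k) := by
  intro n
  induction n using Nat.strong_induction_on with
  | _ n ihn =>
  intro k
  induction k using Nat.strong_induction_on with
  | _ k ihk =>
  intro hk hkn
  obtain rfl | rfl | hk3 : k = 1 ∨ k = 2 ∨ 3 ≤ k := by omega
  · obtain rfl | hn := eq_or_lt_of_le hkn
    · simp [hK.one_one, hh.one_one, inr_eq_smul_eps]
    obtain ⟨m, rfl⟩ : ∃ m, n = m + 2 := ⟨n - 2, by omega⟩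
    have hrow : ∀ i ∈ Finset.Icc 2 (m + 1),
        aeval (ε : R[ε]) (K (m + 1) i) = inr ((-1) ^ m * h (m + 1) i) := fun i hi =>
      ihn (m + 1) (by omega) i (by simp at hi; omega) (by simp at hi; omega)
    rw [hK.col_one _ hn, hh.col_one _ hn]
    simp only [Nat.reduceSubDiff]
    rw [← Finset.insert_Icc_add_one_left_eq_Icc (show 1 ≤ m + 1 by omega),
      Finset.sum_insert (by simp), map_sub, map_mul, map_sum, Finset.sum_congr rfl hrow,
      ← inr_sum, ← Finset.mul_sum, ihn (m + 1) (by omega) 1 le_rfl (by omega)]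
    ext <;> simp [pow_succ]
    ring
  · obtain ⟨m, rfl⟩ : ∃ m, n = m + 2 := ⟨n - 2, by omega⟩
    rw [hK.col_two _ hkn, hh.col_two _ hkn]
    simp only [Nat.reduceSubDiff]
    rw [map_sub, map_add, map_mul, map_mul, map_pow, map_ofNat, aeval_X, eps_pow_two, zero_mul,
      ihk 1 (by omega) le_rfl (by omega), ihn (m + 1) (by omega) 1 le_rfl (by omega)]
    ext <;> simp [two_mul, pow_succ]
    ring
  · obtain ⟨m, rfl⟩ : ∃ m, n = m + 2 := ⟨n - 2, by omega⟩
    rw [hK.col_of_three_le _ _ hk3 hkn, hh.col_of_three_le _ _ hk3 hkn]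
    simp only [map_add, map_sub, map_mul, aeval_X, map_ofNat, Nat.reduceSubDiff,
      Nat.add_sub_cancel]
    rw [ihk (k - 1) (by omega) (by omega) (by omega), ihk (k - 2) (by omega) (by omega) (by omega),
      ihn (m + 1) (by omega) (k - 1) (by omega) (by omega),
      ihn (m + 1) (by omega) (k - 2) (by omega) (by omega),
      ihn m (by omega) (k - 2) (by omega) (by omega)]
    ext <;> simp [two_mul, pow_succ]
    ring

theorem lando_conjecture_general (K : ℕ → ℕ → Polynomial ℤ) (h : ℕ → ℕ → ℤ)
    (hK11 : K 1 1 = X)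
    (hKrec1 : ∀ n, 2 ≤ n → K n 1 = (X - 1) * K (n - 1) 1 - ∑ i ∈ Finset.Icc 2 (n - 1), K (n - 1) i)
    (hKrec2 : ∀ n, 2 ≤ n → K n 2 = 2 * K n 1 + K (n - 1) 1 - X ^ 2 * K (n - 2) 1)
    (hKreck : ∀ n k, 3 ≤ k → k ≤ n →
      K n k = 2 * K n (k - 1) - K n (k - 2) + K (n - 1) (k - 1) + K (n - 1) (k - 2)
        + 2 * X * K (n - 2) (k - 2))
    (h11 : h 1 1 = 1)
    (hrec1 : ∀ n, 2 ≤ n → h n 1 = ∑ i ∈ Finset.Icc 1 (n - 1), h (n - 1) i)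
    (hrec2 : ∀ n, 2 ≤ n → h n 2 = 2 * h n 1 - h (n - 1) 1)
    (hreck : ∀ n k, 3 ≤ k → k ≤ n →
      h n k = 2 * h n (k - 1) - h n (k - 2) - h (n - 1) (k - 1) - h (n - 1) (k - 2)) :
    ∀ n, 1 ≤ n → (K n 1).coeff 0 = 0 ∧
      (K n 1).coeff 1 = (-1) ^ (n - 1) * h ((n - 1) + 1) 1 := by
  intro n hn
  have hred := IsPolyKrewerasTriangle.aeval_eps_eq ⟨hK11, hKrec1, hKrec2, hKreck⟩
    ⟨h11, hrec1, hrec2, hreck⟩ n 1 le_rfl hn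
  rw [aeval_eps] at hred
  rw [Nat.sub_add_cancel hn]
  exact ⟨by simpa using congrArg fst hred, by simpa using congrArg snd hred⟩

theorem lando_conjecture (K : ℕ → ℕ → Polynomial ℤ) (h : ℕ → ℕ → ℤ)
    (hK01 : K 0 1 = 1)
    (hK11 : K 1 1 = X)
    (hKrec1 : ∀ n, 2 ≤ n → K n 1 = (X - 1) * K (n - 1) 1 - ∑ i ∈ Finset.Icc 2 (n - 1), K (n - 1) i)
    (hKrec2 : ∀ n, 2 ≤ n → K n 2 = 2 * K n 1 + K (n - 1) 1 - X ^ 2 * K (n - 2) 1)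
    (hKreck : ∀ n k, 3 ≤ k → k ≤ n →
      K n k = 2 * K n (k - 1) - K n (k - 2) + K (n - 1) (k - 1) + K (n - 1) (k - 2)
        + 2 * X * K (n - 2) (k - 2))
    (h11 : h 1 1 = 1)
    (hrec1 : ∀ n, 2 ≤ n → h n 1 = ∑ i ∈ Finset.Icc 1 (n - 1), h (n - 1) i)
    (hrec2 : ∀ n, 2 ≤ n → h n 2 = 2 * h n 1 - h (n - 1) 1)
    (hreck : ∀ n k, 3 ≤ k → k ≤ n →
      h n k = 2 * h n (k - 1) - h n (k - 2) - h (n - 1) (k - 1) - h (n - 1) (k - 2)) :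
    ∀ n, 1 ≤ n → (K n 1).coeff 0 = 0 ∧
      (K n 1).coeff 1 = (-1) ^ (n - 1) * h ((n - 1) + 1) 1 :=
  lando_conjecture_general K h hK11 hKrec1 hKrec2 hKreck h11 hrec1 hrec2 hreck
end
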